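/- Let w be a word over Σ with ι(w) = k ≥ 1 and s ∈ ℕ₀. If ι(w^{s+1}) − ι(w^s) = k then r(w^s) is a suffix of r(w^{s+1}); and if ι(w^{s+1}) − ι(w^s) = k + 1 then r(w^{s+1}) is a suffix of r(w^s). -/

import Mathlib

open List

variable {α : Type*}

/-- `w` is `k`-universal: every word of length `k` over the alphabet `α`
is a scattered factor (subsequence) of `w`. -/
def IsUniversal [Fintype α] (k : ℕ) (w : List α) : Prop :=
  ∀ u : List α, u.length = k → u.Sublist w

/-- The universality index `ι(w)`: the largest `k` such that `w` is `k`-universal. -/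
noncomputable def univIndex [Fintype α] (w : List α) : ℕ :=
  sSup {k | IsUniversal k w}

/-- The circular universality index `ζ(w)`: the largest `k` such that some
conjugate of `w` is `k`-universal. -/
noncomputable def circIndex [Fintype α] (w : List α) : ℕ :=
  sSup {k | ∃ u v : List α, w = u ++ v ∧ IsUniversal k (v ++ u)}

/-- `wpow w s = w^s`, the `s`-fold concatenation of `w`. -/
def wpow (w : List α) (s : ℕ) : List α := (List.replicate s w).flatten

/-- Auxiliary (fuelled) computation of the remainder of the arch factorisation:
greedily remove the shortest prefix containing every letter of the alphabet. -/
def remAux [Fintype α] [DecidableEq α] : ℕ → List α → List α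
  | 0, w => w
  | (n+1), w =>
    match (List.range' 1 w.length).find?
        (fun m => decide ((w.take m).toFinset = Finset.univ)) with
    | none => w
    | some m => remAux n (w.drop m)

/-- `rem w = r(w)`, the remainder of the arch factorisation of `w`. -/
def rem [Fintype α] [DecidableEq α] (w : List α) : List α := remAux w.length w

/-- Auxiliary (fuelled) computation of the list of arches of `w`. -/
def archesAux [Fintype α] [DecidableEq α] : ℕ → List α → List (List α)
  | 0, _ => []
  | (n+1), w =>
    match (List.range' 1 w.length).find?
        (fun m => decide ((w.take m).toFinset = Finset.univ)) with
    | none => []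
    | some m => (w.take m) :: archesAux n (w.drop m)

/-- `arches w`: the list `[arch₁(w), …, arch_{ι(w)}(w)]` of arches of `w`. -/
def arches [Fintype α] [DecidableEq α] (w : List α) : List (List α) :=
  archesAux w.length w

/-!
Let `p₀ = 0 < p₁ < ⋯` be the end positions of the greedy arches of a power of `w`, and `f p`
the end of the shortest arch starting at `p`. Then `f` is monotone and commutes with a shift
by `|w|`. With `k = ι(w)` we have `p_k = |w| - |r(w)|`, and an arch starting inside `r(w)` ends
beyond the first copy of `w`; from these base cases induction on `j` gives
`p_{j+k} ≤ p_j + |w| ≤ p_{j+k+1}`. In `w^{s+2}` the first `ι(w^s)` resp. `ι(w^{s+1})` arches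
leave `r(w^s)ww` resp. `r(w^{s+1})w`, so in the two cases of the theorem these inequalities
compare `|r(w^s)|` with `|r(w^{s+1})|`; both are suffixes of `w^{s+1}`, so lengths suffice.
-/

theorem sublist_tail_of_cons_sublist_append {a : α} {u p r : List α} (ha : a ∉ p)
    (h : a :: u <+ p ++ r) : u <+ r.tail := by
  induction p with
  | nil => exact h.tail
  | cons b p ih =>
    rcases sublist_cons_iff.1 h with h | ⟨t, ht, -⟩
    · exact ih (fun hp => ha (mem_cons_of_mem b hp)) h
    · exact absurd (cons.inj ht).1 (fun hab => ha (hab ▸ mem_cons_self))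

theorem wpow_succ (w : List α) (n : ℕ) : wpow w (n + 1) = wpow w n ++ w := by
  simp [wpow, replicate_succ']

theorem wpow_succ' (w : List α) (n : ℕ) : wpow w (n + 1) = w ++ wpow w n := by
  simp [wpow, replicate_succ]

theorem exists_eq_append_of_suffix_wpow {w z : List α} {n : ℕ} (hz : z <:+ wpow w (n + 1))
    (hlen : w.length ≤ z.length) : ∃ u, z = u ++ w ∧ u <:+ wpow w (n + 1) := by
  rw [wpow_succ] at hz
  obtain ⟨u, rfl⟩ := suffix_of_suffix_length_le (suffix_append _ _) hz hlen
  refine ⟨u, rfl, ?_⟩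
  rw [wpow_succ']
  exact suffix_append_of_suffix (suffix_append_self_iff.1 hz)

section ArchFactorization

variable [Fintype α]

theorem isUniversal_zero (z : List α) : IsUniversal 0 z := fun _ hu =>
  length_eq_zero_iff.1 hu ▸ nil_sublist z

theorem univIndex_eq_of_isUniversal_iff {z : List α} {n : ℕ}
    (h : ∀ j, IsUniversal j z ↔ j ≤ n) : univIndex z = n := by
  rw [univIndex, show {j | IsUniversal j z} = Set.Iic n from Set.ext h, csSup_Iic]

variable [DecidableEq α]

-- The same `find?` as in `remAux`, so that `remAux` unfolds to a match on `firstArchLen`.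
def firstArchLen (z : List α) : Option ℕ :=
  (List.range' 1 z.length).find? fun m => decide ((z.take m).toFinset = Finset.univ)

def dropArch (z : List α) : List α := z.drop ((firstArchLen z).getD 0)

theorem toFinset_eq_univ_of_subset {u x : List α} (hu : u.toFinset = Finset.univ) (h : u ⊆ x) :
    x.toFinset = Finset.univ :=
  Finset.eq_univ_iff_forall.2 fun a =>
    mem_toFinset.2 (h (mem_toFinset.1 (hu ▸ Finset.mem_univ a)))

theorem firstArchLen_eq_some_iff {z : List α} {m : ℕ} :
    firstArchLen z = some m ↔ 1 ≤ m ∧ m ≤ z.length ∧ (z.take m).toFinset = Finset.univ ∧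
      ∀ j, 1 ≤ j → j < m → (z.take j).toFinset ≠ Finset.univ := by
  simp only [firstArchLen, find?_range'_eq_some, decide_eq_true_eq, mem_range'_1,
    Bool.not_eq_true', decide_eq_false_iff_not]
  constructor
  · rintro ⟨h, ⟨h1, h2⟩, hmin⟩; exact ⟨h1, by omega, h, hmin⟩
  · rintro ⟨h1, h2, h, hmin⟩; exact ⟨h, ⟨h1, by omega⟩, hmin⟩

theorem firstArchLen_eq_none {z : List α} (hz : z.toFinset ≠ Finset.univ) :
    firstArchLen z = none := by
  simp only [firstArchLen, find?_eq_none, decide_eq_true_eq]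
  exact fun m _ hm => hz (toFinset_eq_univ_of_subset hm (take_sublist m z).subset)

theorem exists_firstArchLen_eq_some [Nonempty α] {z : List α} (hz : z.toFinset = Finset.univ) :
    ∃ m, firstArchLen z = some m := by
  have hne : z ≠ [] := by
    rintro rfl
    exact Finset.univ_nonempty.ne_empty hz.symm
  refine Option.ne_none_iff_exists'.1 fun h => ?_
  simp only [firstArchLen, find?_eq_none, decide_eq_true_eq, mem_range'_1] at h
  exact h z.length ⟨length_pos_iff.2 hne, by omega⟩ (by rwa [take_length])

theorem firstArchLen_append {u : List α} {m : ℕ} (h : firstArchLen u = some m) (v : List α) :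
    firstArchLen (u ++ v) = some m := by
  obtain ⟨hm1, hmu, hcov, hmin⟩ := firstArchLen_eq_some_iff.1 h
  refine firstArchLen_eq_some_iff.2 ⟨hm1, by simp; omega, ?_, fun j hj1 hjm => ?_⟩
  · rwa [take_append_of_le_length hmu]
  · rw [take_append_of_le_length (by omega)]
    exact hmin j hj1 hjm

theorem dropArch_of_firstArchLen_eq_some {z : List α} {m : ℕ} (h : firstArchLen z = some m) :
    dropArch z = z.drop m := by
  rw [dropArch, h, Option.getD_some]

theorem dropArch_suffix (z : List α) : dropArch z <:+ z := drop_suffix _ _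

theorem dropArch_iterate_suffix (i : ℕ) (z : List α) : dropArch^[i] z <:+ z := by
  induction i with
  | zero => exact suffix_refl z
  | succ i ih => exact Function.iterate_succ_apply' dropArch i z ▸ (dropArch_suffix _).trans ih

theorem length_dropArch_lt [Nonempty α] {z : List α} (hz : z.toFinset = Finset.univ) :
    (dropArch z).length < z.length := by
  obtain ⟨m, hm⟩ := exists_firstArchLen_eq_some hz
  obtain ⟨hm1, hmz, -⟩ := firstArchLen_eq_some_iff.1 hm
  rw [dropArch_of_firstArchLen_eq_some hm, length_drop]
  omega

theorem dropArch_induction [Nonempty α] {P : List α → Prop}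
    (base : ∀ z, z.toFinset ≠ Finset.univ → P z)
    (step : ∀ z, z.toFinset = Finset.univ → P (dropArch z) → P z) (z : List α) : P z := by
  by_cases hz : z.toFinset = Finset.univ
  · exact step z hz (dropArch_induction base step (dropArch z))
  · exact base z hz
termination_by z.length
decreasing_by exact length_dropArch_lt hz

theorem dropArch_append [Nonempty α] {u : List α} (hu : u.toFinset = Finset.univ) (v : List α) :
    dropArch (u ++ v) = dropArch u ++ v := by
  obtain ⟨m, hm⟩ := exists_firstArchLen_eq_some hu
  rw [dropArch_of_firstArchLen_eq_some (firstArchLen_append hm v),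
    dropArch_of_firstArchLen_eq_some hm,
    drop_append_of_le_length (firstArchLen_eq_some_iff.1 hm).2.1]

theorem length_dropArch_append_lt [Nonempty α] {u v : List α}
    (huv : (u ++ v).toFinset = Finset.univ) (hu : u.toFinset ≠ Finset.univ) :
    (dropArch (u ++ v)).length < v.length := by
  obtain ⟨m, hm⟩ := exists_firstArchLen_eq_some huv
  obtain ⟨-, hm_le, hcov, -⟩ := firstArchLen_eq_some_iff.1 hm
  have hum : u.length < m := by
    by_contra! hmu
    rw [take_append_of_le_length hmu] at hcov
    exact hu (toFinset_eq_univ_of_subset hcov (take_sublist m u).subset)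
  rw [length_append] at hm_le
  rw [dropArch_of_firstArchLen_eq_some hm, length_drop, length_append]
  omega

theorem dropArch_suffix_dropArch [Nonempty α] {u x : List α} (hux : u <:+ x)
    (hu : u.toFinset = Finset.univ) : dropArch u <:+ dropArch x := by
  obtain ⟨p, rfl⟩ := hux
  obtain ⟨mu, hmu⟩ := exists_firstArchLen_eq_some hu
  obtain ⟨mx, hmx⟩ := exists_firstArchLen_eq_some
    (toFinset_eq_univ_of_subset hu (subset_append_right p u))
  obtain ⟨hmu1, hmu_le, hcov, -⟩ := firstArchLen_eq_some_iff.1 hmu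
  obtain ⟨-, -, -, hmin⟩ := firstArchLen_eq_some_iff.1 hmx
  have hmx_le : mx ≤ p.length + mu := by
    by_contra! hlt
    refine hmin (p.length + mu) (by omega) hlt (toFinset_eq_univ_of_subset hcov ?_)
    rw [take_append, take_of_length_le (l := p) (by omega), Nat.add_sub_cancel_left]
    exact subset_append_right _ _
  rw [dropArch_of_firstArchLen_eq_some hmu, dropArch_of_firstArchLen_eq_some hmx]
  refine suffix_of_suffix_length_le ((drop_suffix _ _).trans (suffix_append _ _))
    (drop_suffix _ _) ?_
  simp only [length_drop, length_append]
  omega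

theorem remAux_succ (n : ℕ) (z : List α) :
    remAux (n + 1) z = match firstArchLen z with
      | none => z
      | some m => remAux n (z.drop m) := rfl

theorem remAux_eq_rem {n : ℕ} {z : List α} (h : z.length ≤ n) : remAux n z = rem z := by
  induction n using Nat.strong_induction_on generalizing z with
  | _ n ih =>
  rcases z with _ | ⟨a, z⟩
  · cases n <;> rfl
  obtain ⟨n, rfl⟩ : ∃ n', n = n' + 1 := ⟨n - 1, by simp at h; omega⟩
  rw [rem, length_cons, remAux_succ, remAux_succ]
  cases hm : firstArchLen (a :: z) with
  | none => rfl
  | some m =>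
    have hm1 := (firstArchLen_eq_some_iff.1 hm).1
    have hlen : (drop m (a :: z)).length ≤ z.length := by simp; omega
    dsimp only
    rw [ih n (by omega) (by simp at h; omega), ih z.length (by simp at h; omega) hlen]

theorem rem_dropArch (z : List α) : rem (dropArch z) = rem z := by
  cases hm : firstArchLen z with
  | none => rw [dropArch, hm, Option.getD_none, drop_zero]
  | some m =>
    obtain ⟨hm1, hmz, -⟩ := firstArchLen_eq_some_iff.1 hm
    obtain ⟨l, hl⟩ : ∃ l, z.length = l + 1 := ⟨z.length - 1, by omega⟩
    rw [dropArch_of_firstArchLen_eq_some hm, show rem z = remAux (l + 1) z by rw [rem, hl],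
      remAux_succ, hm]
    exact (remAux_eq_rem (by simp; omega)).symm

theorem rem_of_toFinset_ne_univ {z : List α} (hz : z.toFinset ≠ Finset.univ) : rem z = z := by
  rw [rem]
  rcases z with _ | ⟨a, z⟩
  · rfl
  · rw [length_cons, remAux_succ, firstArchLen_eq_none hz]

theorem rem_toFinset_ne_univ [Nonempty α] (z : List α) : (rem z).toFinset ≠ Finset.univ := by
  induction z using dropArch_induction with
  | base z hz => rwa [rem_of_toFinset_ne_univ hz]
  | step z _ ih => rwa [← rem_dropArch]

theorem rem_suffix [Nonempty α] (z : List α) : rem z <:+ z := by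
  induction z using dropArch_induction with
  | base z hz => rw [rem_of_toFinset_ne_univ hz]
  | step z _ ih => exact (rem_dropArch z ▸ ih).trans (dropArch_suffix z)

theorem isUniversal_iff_eq_zero [Nonempty α] {z : List α} (hz : z.toFinset ≠ Finset.univ)
    {j : ℕ} : IsUniversal j z ↔ j = 0 := by
  refine ⟨fun hj => ?_, fun hj => hj ▸ isUniversal_zero z⟩
  obtain ⟨a, ha⟩ := not_forall.1 (mt Finset.eq_univ_iff_forall.2 hz)
  by_contra hj0
  refine ha (mem_toFinset.2 ((hj (replicate j a) length_replicate).subset ?_))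
  exact mem_replicate.2 ⟨hj0, rfl⟩

theorem isUniversal_succ_iff [Nonempty α] {z : List α} {m : ℕ} (hm : firstArchLen z = some m)
    {j : ℕ} : IsUniversal (j + 1) z ↔ IsUniversal j (z.drop m) := by
  obtain ⟨hm1, -, hcov, hmin⟩ := firstArchLen_eq_some_iff.1 hm
  constructor
  · intro h u hu
    have hprefix : (z.take (m - 1)).toFinset ≠ Finset.univ := by
      rcases Nat.lt_or_ge 1 m with hm1' | hm1'
      · exact hmin (m - 1) (by omega) (by omega)
      · rw [show m - 1 = 0 by omega, take_zero, toFinset_nil]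
        exact Finset.univ_nonempty.ne_empty.symm
    -- a letter `a` missing before position `m - 1` can only be matched from there on
    obtain ⟨a, ha⟩ := not_forall.1 (mt Finset.eq_univ_iff_forall.2 hprefix)
    have hsub := h (a :: u) (by simp [hu])
    rw [← take_append_drop (m - 1) z] at hsub
    have := sublist_tail_of_cons_sublist_append (mt mem_toFinset.2 ha) hsub
    rwa [tail_drop, Nat.sub_add_cancel hm1] at this
  · rintro h (_ | ⟨a, u⟩) hu
    · exact nil_sublist z
    · have ha : a ∈ z.take m := mem_toFinset.1 (hcov ▸ Finset.mem_univ a)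
      rw [← take_append_drop m z, ← singleton_append]
      exact (singleton_sublist.2 ha).append (h u (by simpa using hu))

theorem univIndex_of_toFinset_ne_univ [Nonempty α] {z : List α}
    (hz : z.toFinset ≠ Finset.univ) : univIndex z = 0 :=
  univIndex_eq_of_isUniversal_iff fun _ => (isUniversal_iff_eq_zero hz).trans Nat.le_zero.symm

theorem isUniversal_iff_of_dropArch [Nonempty α] {z : List α} (hz : z.toFinset = Finset.univ)
    {n : ℕ} (h : ∀ j, IsUniversal j (dropArch z) ↔ j ≤ n) (j : ℕ) :
    IsUniversal j z ↔ j ≤ n + 1 := by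
  obtain ⟨m, hm⟩ := exists_firstArchLen_eq_some hz
  rcases j with _ | j
  · exact iff_of_true (isUniversal_zero z) (Nat.zero_le _)
  · rw [isUniversal_succ_iff hm, ← dropArch_of_firstArchLen_eq_some hm, h]
    omega

theorem isUniversal_iff_le_univIndex [Nonempty α] (z : List α) (j : ℕ) :
    IsUniversal j z ↔ j ≤ univIndex z := by
  induction z using dropArch_induction generalizing j with
  | base z hz => rw [isUniversal_iff_eq_zero hz, univIndex_of_toFinset_ne_univ hz, Nat.le_zero]
  | step z hz ih =>
    rw [univIndex_eq_of_isUniversal_iff (isUniversal_iff_of_dropArch hz ih)]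
    exact isUniversal_iff_of_dropArch hz ih j

theorem univIndex_dropArch [Nonempty α] {z : List α} (hz : z.toFinset = Finset.univ) :
    univIndex z = univIndex (dropArch z) + 1 :=
  univIndex_eq_of_isUniversal_iff (isUniversal_iff_of_dropArch hz (isUniversal_iff_le_univIndex _))

theorem dropArch_iterate_univIndex_append [Nonempty α] (x y : List α) :
    dropArch^[univIndex x] (x ++ y) = rem x ++ y := by
  induction x using dropArch_induction with
  | base x hx => rw [univIndex_of_toFinset_ne_univ hx, rem_of_toFinset_ne_univ hx]; rfl
  | step x hx ih =>
    rw [univIndex_dropArch hx, Function.iterate_succ_apply, dropArch_append hx, ih, rem_dropArch]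

end ArchFactorization

section ArchesOfPowers

variable [Fintype α] [DecidableEq α] [Nonempty α] {w : List α}

theorem length_dropArch_iterate_le (hw : w.toFinset = Finset.univ) (n j : ℕ) :
    (dropArch^[j] (wpow w (n + 1))).length ≤
      (dropArch^[j + univIndex w] (wpow w (n + 1))).length + w.length := by
  set x := fun i => dropArch^[i] (wpow w (n + 1))
  have hxsucc (i : ℕ) : x (i + 1) = dropArch (x i) := Function.iterate_succ_apply' dropArch i _
  have hxsuf (i : ℕ) : x i <:+ wpow w (n + 1) := dropArch_iterate_suffix i _
  show (x j).length ≤ (x (j + univIndex w)).length + w.length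
  induction j with
  | zero =>
    have hxk : x (univIndex w) = rem w ++ wpow w n := by
      rw [← dropArch_iterate_univIndex_append, ← wpow_succ']
    rw [zero_add, hxk]
    change (wpow w (n + 1)).length ≤ _
    rw [wpow_succ', length_append, length_append]
    omega
  | succ j ih =>
    by_cases hshort : (x (j + 1)).length ≤ w.length
    · omega
    obtain ⟨u, hxj, hu⟩ := exists_eq_append_of_suffix_wpow (hxsuf j)
      (by have := (dropArch_suffix (x j)).length_le; rw [← hxsucc] at this; omega)
    have hxj_univ : (u ++ w).toFinset = Finset.univ :=
      toFinset_eq_univ_of_subset hw (subset_append_right u w)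
    have hu_univ : u.toFinset = Finset.univ := by
      by_contra hu'
      have := length_dropArch_append_lt hxj_univ hu'
      rw [← hxj, ← hxsucc] at this
      omega
    have hux : u <:+ x (j + univIndex w) :=
      suffix_of_suffix_length_le hu (hxsuf _) (by rw [hxj, length_append] at ih; omega)
    have key := (dropArch_suffix_dropArch hux hu_univ).length_le
    rw [← hxsucc, show j + univIndex w + 1 = j + 1 + univIndex w by omega] at key
    rw [hxsucc, hxj, dropArch_append hu_univ, length_append]
    omega

theorem length_dropArch_iterate_add_le (n j : ℕ)
    (h : (dropArch^[j + univIndex w + 1] (wpow w (n + 1))).toFinset = Finset.univ) :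
    (dropArch^[j + univIndex w + 1] (wpow w (n + 1))).length + w.length ≤
      (dropArch^[j] (wpow w (n + 1))).length := by
  set x := fun i => dropArch^[i] (wpow w (n + 1))
  have hxsucc (i : ℕ) : x (i + 1) = dropArch (x i) := Function.iterate_succ_apply' dropArch i _
  have hxsuf (i : ℕ) : x i <:+ wpow w (n + 1) := dropArch_iterate_suffix i _
  change (x (j + univIndex w + 1)).toFinset = Finset.univ at h
  show (x (j + univIndex w + 1)).length + w.length ≤ (x j).length
  induction j with
  | zero =>
    have hxk : x (univIndex w) = rem w ++ wpow w n := by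
      rw [← dropArch_iterate_univIndex_append, ← wpow_succ']
    rw [zero_add, hxsucc, hxk] at h ⊢
    have := length_dropArch_append_lt (toFinset_eq_univ_of_subset h (dropArch_suffix _).subset)
      (rem_toFinset_ne_univ w)
    change _ ≤ (wpow w (n + 1)).length
    rw [wpow_succ', length_append]
    omega
  | succ j ih =>
    rw [show j + 1 + univIndex w + 1 = j + univIndex w + 1 + 1 by omega,
      hxsucc (j + univIndex w + 1)] at h ⊢
    have h' := toFinset_eq_univ_of_subset h (dropArch_suffix _).subset
    have ih := ih h'
    obtain ⟨u, hxj, hu⟩ := exists_eq_append_of_suffix_wpow (hxsuf j) (by omega)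
    have hsub : x (j + univIndex w + 1) <:+ u :=
      suffix_of_suffix_length_le (hxsuf _) hu (by rw [hxj, length_append] at ih; omega)
    have key := (dropArch_suffix_dropArch hsub h').length_le
    rw [hxsucc j, hxj, dropArch_append (toFinset_eq_univ_of_subset h' hsub.subset), length_append]
    omega

end ArchesOfPowers

theorem rem_suffix_of_growth [Fintype α] [DecidableEq α] (w : List α) (k : ℕ)
    (hk : univIndex w = k) (hk1 : 1 ≤ k) (s : ℕ) :
    (univIndex (wpow w (s + 1)) = univIndex (wpow w s) + k →
        (rem (wpow w s)) <:+ (rem (wpow w (s + 1)))) ∧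
      (univIndex (wpow w (s + 1)) = univIndex (wpow w s) + (k + 1) →
        (rem (wpow w (s + 1))) <:+ (rem (wpow w s))) := by
  rcases isEmpty_or_nonempty α with _ | _
  · simp only [Subsingleton.elim _ ([] : List α), suffix_refl, imp_true_iff, and_self]
  have hw : w.toFinset = Finset.univ := by
    by_contra hw
    rw [univIndex_of_toFinset_ne_univ hw] at hk
    omega
  subst hk
  have hA : dropArch^[univIndex (wpow w s)] (wpow w (s + 1 + 1)) = rem (wpow w s) ++ (w ++ w) := by
    rw [wpow_succ, wpow_succ, append_assoc, dropArch_iterate_univIndex_append]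
  have hB : dropArch^[univIndex (wpow w (s + 1))] (wpow w (s + 1 + 1)) =
      rem (wpow w (s + 1)) ++ w := by
    rw [wpow_succ _ (s + 1), dropArch_iterate_univIndex_append]
  have hrs : rem (wpow w s) <:+ wpow w (s + 1) :=
    (rem_suffix _).trans (wpow_succ' w s ▸ suffix_append _ _)
  have hrs1 : rem (wpow w (s + 1)) <:+ wpow w (s + 1) := rem_suffix _
  refine ⟨fun h => suffix_of_suffix_length_le hrs hrs1 ?_,
    fun h => suffix_of_suffix_length_le hrs1 hrs ?_⟩
  · have := length_dropArch_iterate_le hw (s + 1) (univIndex (wpow w s))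
    rw [← h, hA, hB] at this
    simp only [length_append] at this
    omega
  · rw [h, ← add_assoc] at hB
    have := length_dropArch_iterate_add_le (s + 1) (univIndex (wpow w s))
      (by rw [hB]; exact toFinset_eq_univ_of_subset hw (subset_append_right _ _))
    rw [hB, hA] at this
    simp only [length_append] at this
    omega
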